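/- For α ∈ (0,2), let q_α(x) = exp(−|x|^α) and for a positive integer k let q_{α,k} be the k-fold convolution of q_α with itself. Then there exist positive constants a_{α,k} and b_{α,k} such that for all x ∈ ℝ: a_{α,k} exp(−|x|^α) ≤ q_{α,k}(x) ≤ b_{α,k} exp(−|x|^α / 2^{(k−1)α}). -/

import Mathlib

open MeasureTheory Filter

noncomputable section

/-- `q_α(x) = exp(-|x|^α)`. -/
def qa (α : ℝ) (x : ℝ) : ℝ := Real.exp (-|x| ^ α)

/-- `qak α k = q_{α,k+1}`, the `(k+1)`-fold convolution of `q_α` with itself: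
`qak α 0 = q_α` and `qak α (k+1) = (qak α k) ⋆ q_α`. -/
def qak (α : ℝ) : ℕ → ℝ → ℝ
  | 0 => qa α
  | (k + 1) => fun x => ∫ t : ℝ, qak α k (x - t) * qa α t

/-!
Induction on the number of factors: bounds `a exp (-|x|^α) ≤ f x ≤ b exp (-|x|^α / M)` pass from
`f` to `f ⋆ q_α` with `M` replaced by `2^α M`.
Upper bound: since `|x| ≤ |x - t| + |t|`, one of `|x - t|`, `|t|` is at least `|x| / 2`, so
`exp (-|x - t|^α / M) * exp (-|t|^α) ≤ exp (-|x|^α / (2^α M)) * (exp (-|x - t|^α / M) + exp (-|t|^α))`,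
and the right side integrates in `t` to a constant times `exp (-|x|^α / (2^α M))`.
Lower bound: on the unit interval with endpoint `x` on the side of `0` we have `|x - t| ≤ 1` and
`|t|^α ≤ |x|^α + 1`, so the integrand is at least a constant times `exp (-|x|^α)`.
-/

open Real Set

theorem integrable_exp_neg_mul_norm_rpow {E : Type*} [NormedAddCommGroup E] [NormedSpace ℝ E]
    [MeasurableSpace E] [BorelSpace E] [FiniteDimensional ℝ E] [Nontrivial E]
    (μ : Measure E) [μ.IsAddHaarMeasure] {p b : ℝ} (hp : 0 < p) (hb : 0 < b) :
    Integrable (fun x => exp (-b * ‖x‖ ^ p)) μ := by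
  refine (integrable_fun_norm_addHaar μ (f := fun y => exp (-b * y ^ p))).2 ?_
  have hs : (-1 : ℝ) < ((Module.finrank ℝ E - 1 : ℕ) : ℝ) := by
    linarith [Nat.cast_nonneg (α := ℝ) (Module.finrank ℝ E - 1)]
  refine (integrableOn_rpow_mul_exp_neg_mul_rpow hs hp hb).congr_fun (fun y _ => ?_)
    measurableSet_Ioi
  simp only [rpow_natCast, smul_eq_mul]

theorem integrable_exp_neg_abs_rpow_div {α M : ℝ} (hα : 0 < α) (hM : 0 < M) :
    Integrable (fun x : ℝ => exp (-|x| ^ α / M)) := by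
  refine (integrable_exp_neg_mul_norm_rpow volume hα (inv_pos.2 hM)).congr (ae_of_all _ fun x => ?_)
  change exp (-M⁻¹ * |x| ^ α) = exp (-|x| ^ α / M)
  rw [neg_div, div_eq_inv_mul, neg_mul]

theorem integrable_qa {α : ℝ} (hα : 0 < α) : Integrable (qa α) := by
  show Integrable fun x => exp (-|x| ^ α)
  simpa using integrable_exp_neg_abs_rpow_div (M := 1) hα one_pos

theorem measurable_qa (α : ℝ) : Measurable (qa α) := by
  unfold qa
  fun_prop

theorem measurable_qak (α : ℝ) : ∀ n, Measurable (qak α n)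
  | 0 => measurable_qa α
  | n + 1 =>
    (((measurable_qak α n).comp (measurable_fst.sub measurable_snd)).mul
      ((measurable_qa α).comp measurable_snd)).stronglyMeasurable.integral_prod_right'.measurable

theorem mul_le_mul_add_of_min_le {p q r : ℝ} (hp : 0 ≤ p) (hq : 0 ≤ q) (h : min p q ≤ r) :
    p * q ≤ r * (p + q) := by
  rcases min_cases p q with ⟨hmin, _⟩ | ⟨hmin, _⟩ <;> rw [hmin] at h <;> nlinarith

theorem abs_le_two_mul_max_abs_sub_abs (x t : ℝ) : |x| ≤ 2 * max |x - t| |t| := by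
  have := abs_sub_le x t 0
  simp only [sub_zero] at this
  linarith [le_max_left |x - t| |t|, le_max_right |x - t| |t|]

theorem min_exp_le_exp_div_two_rpow {α M : ℝ} (hα : 0 ≤ α) (hM : 1 ≤ M) (x t : ℝ) :
    min (exp (-|x - t| ^ α / M)) (exp (-|t| ^ α)) ≤ exp (-|x| ^ α / (2 ^ α * M)) := by
  have hM₀ : 0 < M := one_pos.trans_le hM
  have hx : |x| ^ α / 2 ^ α ≤ max (|x - t| ^ α) (|t| ^ α) := by
    rw [← div_rpow (abs_nonneg x) zero_le_two, ← rpow_max (abs_nonneg _) (abs_nonneg _) hα]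
    gcongr
    linarith [abs_le_two_mul_max_abs_sub_abs x t]
  have hdiv : -|x| ^ α / (2 ^ α * M) = -(|x| ^ α / 2 ^ α) / M := by rw [neg_div, neg_div, div_div]
  rw [← exp_monotone.map_min, exp_le_exp, hdiv]
  rcases le_max_iff.1 hx with h | h
  · refine (min_le_left _ _).trans ?_
    gcongr
  · refine (min_le_right _ _).trans ?_
    calc -|t| ^ α ≤ -|t| ^ α / M := by
          rw [neg_div, neg_le_neg_iff]
          exact div_le_self (by positivity) hM
      _ ≤ -(|x| ^ α / 2 ^ α) / M := by gcongr

theorem integral_comp_sub_mul_qa_le {α M b : ℝ} {f : ℝ → ℝ} (hα : 0 < α) (hM : 1 ≤ M) (hb : 0 ≤ b)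
    (hf₀ : ∀ y, 0 ≤ f y) (hf : ∀ y, f y ≤ b * exp (-|y| ^ α / M)) (x : ℝ) :
    ∫ t, f (x - t) * qa α t ≤
      b * ((∫ t, exp (-|t| ^ α / M)) + ∫ t, qa α t) * exp (-|x| ^ α / (2 ^ α * M)) := by
  set K := exp (-|x| ^ α / (2 ^ α * M))
  have hint : Integrable fun t => exp (-|t| ^ α / M) :=
    integrable_exp_neg_abs_rpow_div hα (one_pos.trans_le hM)
  have hle : ∀ t, f (x - t) * qa α t ≤ b * K * (exp (-|x - t| ^ α / M) + qa α t) := fun t =>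
    calc f (x - t) * qa α t ≤ b * exp (-|x - t| ^ α / M) * qa α t :=
          mul_le_mul_of_nonneg_right (hf _) (exp_pos _).le
      _ = b * (exp (-|x - t| ^ α / M) * qa α t) := mul_assoc _ _ _
      _ ≤ b * (K * (exp (-|x - t| ^ α / M) + qa α t)) :=
          mul_le_mul_of_nonneg_left (mul_le_mul_add_of_min_le (exp_pos _).le (exp_pos _).le
            (min_exp_le_exp_div_two_rpow hα.le hM x t)) hb
      _ = b * K * (exp (-|x - t| ^ α / M) + qa α t) := (mul_assoc _ _ _).symm
  calc ∫ t, f (x - t) * qa α t ≤ ∫ t, b * K * (exp (-|x - t| ^ α / M) + qa α t) :=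
        integral_mono_of_nonneg (ae_of_all _ fun t => mul_nonneg (hf₀ _) (exp_pos _).le)
          (((hint.comp_sub_left x).add (integrable_qa hα)).const_mul _) (ae_of_all _ hle)
    _ = b * ((∫ t, exp (-|t| ^ α / M)) + ∫ t, qa α t) * K := by
        rw [integral_const_mul, integral_add (hint.comp_sub_left x) (integrable_qa hα),
          integral_sub_left_eq_self (fun t => exp (-|t| ^ α / M))]
        ring

theorem exists_forall_Icc_abs_sub_le_one (x : ℝ) :
    ∃ c, ∀ t ∈ Icc c (c + 1), |x - t| ≤ 1 ∧ |t| ≤ max |x| 1 := by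
  have h₁ := le_max_left |x| 1
  have h₂ := le_max_right |x| 1
  rcases le_or_gt 0 x with hx | hx
  · rw [abs_of_nonneg hx] at h₁ h₂ ⊢
    refine ⟨x - 1, fun t ⟨ht₁, ht₂⟩ => ⟨abs_le.2 ⟨?_, ?_⟩, abs_le.2 ⟨?_, ?_⟩⟩⟩ <;> linarith
  · rw [abs_of_neg hx] at h₁ h₂ ⊢
    refine ⟨x, fun t ⟨ht₁, ht₂⟩ => ⟨abs_le.2 ⟨?_, ?_⟩, abs_le.2 ⟨?_, ?_⟩⟩⟩ <;> linarith

theorem le_integral_comp_sub_mul_qa {α a : ℝ} {f : ℝ → ℝ} (hα : 0 ≤ α) (ha : 0 ≤ a)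
    (hf : ∀ y, a * exp (-|y| ^ α) ≤ f y) {x : ℝ}
    (hint : Integrable fun t => f (x - t) * qa α t) :
    a * exp (-2) * exp (-|x| ^ α) ≤ ∫ t, f (x - t) * qa α t := by
  have hf₀ : ∀ y, 0 ≤ f y := fun y => (mul_nonneg ha (exp_pos _).le).trans (hf y)
  obtain ⟨c, hc⟩ := exists_forall_Icc_abs_sub_le_one x
  have hle : ∀ t ∈ Icc c (c + 1), a * exp (-2) * exp (-|x| ^ α) ≤ f (x - t) * qa α t := by
    intro t ht
    obtain ⟨hxt, htx⟩ := hc t ht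
    have h₁ : a * exp (-1) ≤ f (x - t) := by
      refine le_trans ?_ (hf _)
      gcongr
      exact rpow_le_one (abs_nonneg _) hxt hα
    have h₂ : exp (-|x| ^ α - 1) ≤ qa α t := by
      have hxα : 0 ≤ |x| ^ α := by positivity
      have : |t| ^ α ≤ |x| ^ α + 1 :=
        calc |t| ^ α ≤ max |x| 1 ^ α := by gcongr
          _ = max (|x| ^ α) 1 := by rw [rpow_max (abs_nonneg x) zero_le_one hα, one_rpow]
          _ ≤ |x| ^ α + 1 := max_le (by linarith) (by linarith)
      exact exp_le_exp.2 (by linarith)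
    calc a * exp (-2) * exp (-|x| ^ α) = a * exp (-1) * exp (-|x| ^ α - 1) := by
          rw [mul_assoc, mul_assoc, ← exp_add, ← exp_add]
          ring_nf
      _ ≤ f (x - t) * qa α t := mul_le_mul h₁ h₂ (exp_pos _).le (hf₀ _)
  calc a * exp (-2) * exp (-|x| ^ α) = ∫ _ in Icc c (c + 1), a * exp (-2) * exp (-|x| ^ α) := by
        simp [measureReal_def, Real.volume_Icc]
    _ ≤ ∫ t in Icc c (c + 1), f (x - t) * qa α t :=
        setIntegral_mono_on (integrableOn_const (by simp [Real.volume_Icc])) hint.integrableOn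
          measurableSet_Icc hle
    _ ≤ ∫ t, f (x - t) * qa α t :=
        setIntegral_le_integral hint (ae_of_all _ fun t => mul_nonneg (hf₀ _) (exp_pos _).le)

def HasExpBounds (α M : ℝ) (f : ℝ → ℝ) : Prop :=
  ∃ a > 0, ∃ b > 0, ∀ x, a * exp (-|x| ^ α) ≤ f x ∧ f x ≤ b * exp (-|x| ^ α / M)

theorem HasExpBounds.integral_comp_sub_mul_qa {α M : ℝ} {f : ℝ → ℝ} (hf : HasExpBounds α M f)
    (hα : 0 < α) (hM : 1 ≤ M) (hfm : Measurable f) :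
    HasExpBounds α (2 ^ α * M) fun x => ∫ t, f (x - t) * qa α t := by
  obtain ⟨a, ha, b, hb, hab⟩ := hf
  have hf₀ y : 0 ≤ f y := (mul_nonneg ha.le (exp_pos _).le).trans (hab y).1
  have hint x : Integrable fun t => f (x - t) * qa α t := by
    refine (integrable_qa hα).bdd_mul (c := b)
      (hfm.comp (measurable_const.sub measurable_id)).aestronglyMeasurable (ae_of_all _ fun t => ?_)
    rw [Real.norm_of_nonneg (hf₀ _)]
    refine (hab _).2.trans (mul_le_of_le_one_right hb.le (exp_le_one_iff.2 ?_))
    rw [neg_div, neg_nonpos]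
    positivity
  have hC : 0 < (∫ t, exp (-|t| ^ α / M)) + ∫ t, qa α t :=
    add_pos (integral_exp_pos (integrable_exp_neg_abs_rpow_div hα (one_pos.trans_le hM)))
      (integral_exp_pos (integrable_qa hα))
  exact ⟨a * exp (-2), by positivity, _, mul_pos hb hC, fun x =>
    ⟨le_integral_comp_sub_mul_qa hα.le ha.le (fun y => (hab y).1) (hint x),
      integral_comp_sub_mul_qa_le hα hM hb.le hf₀ (fun y => (hab y).2) x⟩⟩

theorem hasExpBounds_qak {α : ℝ} (hα : 0 < α) (n : ℕ) :
    HasExpBounds α (2 ^ ((n : ℝ) * α)) (qak α n) := by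
  induction n with
  | zero => exact ⟨1, one_pos, 1, one_pos, fun x => by simp [qak, qa]⟩
  | succ n ih =>
    have hM : (2 : ℝ) ^ (((n + 1 : ℕ) : ℝ) * α) = 2 ^ α * 2 ^ ((n : ℝ) * α) := by
      rw [← rpow_add two_pos]
      push_cast
      ring_nf
    rw [hM]
    exact ih.integral_comp_sub_mul_qa hα (one_le_rpow one_le_two (by positivity))
      (measurable_qak α n)

/-- Lemma 3.3(2): two-sided exponential bounds for the `k`-fold convolution `q_{α,k}`:
`a_{α,k} exp(-|x|^α) ≤ q_{α,k}(x) ≤ b_{α,k} exp(-|x|^α / 2^{(k-1)α})`.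
(Here `qak α (k-1) = q_{α,k}`.) -/
theorem qak_two_sided_bounds (α : ℝ) (hα : α ∈ Set.Ioo (0 : ℝ) 2) (k : ℕ) (hk : 1 ≤ k) :
    ∃ a > (0 : ℝ), ∃ b > (0 : ℝ), ∀ x : ℝ,
      a * Real.exp (-|x| ^ α) ≤ qak α (k - 1) x ∧
      qak α (k - 1) x ≤ b * Real.exp (-(|x| ^ α) / 2 ^ (((k : ℝ) - 1) * α)) := by
  have hk' : ((k - 1 : ℕ) : ℝ) = (k : ℝ) - 1 := by rw [Nat.cast_sub hk, Nat.cast_one]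
  rw [← hk']
  exact hasExpBounds_qak hα.1 (k - 1)

end
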